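/- Let X ∈ Sp(2p,2n) and Y ∈ ℝ^{2n×2p}. Let Ω be the unique solution of the Lyapunov equation XᵀX Ω + Ω XᵀX = XᵀJ_{2n}ᵀY - YᵀJ_{2n}X. Then the decomposition Y = (Y - J_{2n}XΩ) + J_{2n}XΩ expresses Y as the sum of a tangent vector and a normal vector: (Y - J_{2n}XΩ)ᵀ J_{2n} X + Xᵀ J_{2n} (Y - J_{2n}XΩ) = 0, and J_{2n}XΩ is trace-orthogonal to the tangent space at X. -/
import Mathlib
open Matrix

noncomputable def J (m : ℕ) : Matrix (Fin m ⊕ Fin m) (Fin m ⊕ Fin m) ℝ :=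
  Matrix.fromBlocks 0 1 (-1) 0

lemma Jtrans (m : ℕ) : (_root_.J m)ᵀ = -(_root_.J m) := by
  simp only [_root_.J, Matrix.fromBlocks_transpose, Matrix.fromBlocks_neg,
    Matrix.transpose_zero, Matrix.transpose_one, Matrix.transpose_neg, neg_neg, neg_zero]

lemma JmulJ (m : ℕ) : _root_.J m * _root_.J m = -1 := by
  have h1 : (-1 : Matrix (Fin m ⊕ Fin m) (Fin m ⊕ Fin m) ℝ)
      = fromBlocks (-1) 0 0 (-1) := by
    rw [← Matrix.fromBlocks_one, Matrix.fromBlocks_neg, neg_zero]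
  rw [h1]
  simp [_root_.J, Matrix.fromBlocks_multiply]

lemma frob_zero {k l : Type*} [Fintype k] [Fintype l]
    (M : Matrix k l ℝ) (h : Matrix.trace (Mᵀ * M) = 0) : M = 0 := by
  have h' : ∑ j, ∑ i, M i j * M i j = 0 := by
    simpa [Matrix.trace, Matrix.diag, Matrix.mul_apply] using h
  ext i j
  have h1 : ∀ j' ∈ Finset.univ, (0:ℝ) ≤ ∑ i', M i' j' * M i' j' :=
    fun j' _ => Finset.sum_nonneg fun i' _ => mul_self_nonneg _
  have h2 := (Finset.sum_eq_zero_iff_of_nonneg h1).mp h' j (Finset.mem_univ j)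
  have h3 := (Finset.sum_eq_zero_iff_of_nonneg
    (fun i' _ => mul_self_nonneg (M i' j))).mp h2 i (Finset.mem_univ i)
  simpa using mul_self_eq_zero.mp h3

theorem sp_tangent_normal_decomposition (p n : ℕ)
    (X Y : Matrix (Fin n ⊕ Fin n) (Fin p ⊕ Fin p) ℝ)
    (hX : Xᵀ * J n * X = J p)
    (Ω : Matrix (Fin p ⊕ Fin p) (Fin p ⊕ Fin p) ℝ)
    (hΩ : Xᵀ * X * Ω + Ω * (Xᵀ * X) = Xᵀ * (J n)ᵀ * Y - Yᵀ * J n * X) :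
    ((Y - J n * X * Ω)ᵀ * J n * X + Xᵀ * J n * (Y - J n * X * Ω) = 0) ∧
    (∀ Z : Matrix (Fin n ⊕ Fin n) (Fin p ⊕ Fin p) ℝ,
      Zᵀ * J n * X + Xᵀ * J n * Z = 0 →
      Matrix.trace ((J n * X * Ω)ᵀ * Z) = 0) := by
  have hJJ' : ∀ (M : Matrix (Fin n ⊕ Fin n) (Fin p ⊕ Fin p) ℝ),
      J n * (J n * M) = -M := by
    intro M; rw [← Matrix.mul_assoc, JmulJ]; simp
  -- transpose of hΩ
  have hΩT : Xᵀ * X * Ωᵀ + Ωᵀ * (Xᵀ * X)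
      = -(Xᵀ * (J n)ᵀ * Y - Yᵀ * J n * X) := by
    have h := congrArg Matrix.transpose hΩ
    simp only [Matrix.transpose_add, Matrix.transpose_mul, Matrix.transpose_sub,
      Matrix.transpose_transpose] at h
    rw [add_comm, h]
    simp only [Matrix.mul_assoc]
    abel
  set S := Ω + Ωᵀ with hSdef
  have hSsym : Sᵀ = S := by simp [hSdef, add_comm]
  have hS : Xᵀ * X * S + S * (Xᵀ * X) = 0 := by
    have e : Xᵀ * X * S + S * (Xᵀ * X)
        = (Xᵀ * X * Ω + Ω * (Xᵀ * X)) + (Xᵀ * X * Ωᵀ + Ωᵀ * (Xᵀ * X)) := by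
      rw [hSdef]
      simp only [Matrix.mul_add, Matrix.add_mul]
      abel
    rw [e, hΩ, hΩT]; abel
  have hAS : Xᵀ * X * S = -(S * (Xᵀ * X)) := by
    have := hS
    have : Xᵀ * X * S = Xᵀ * X * S + S * (Xᵀ * X) - S * (Xᵀ * X) := by abel
    rw [this, hS]; abel
  have e1 : (X * S)ᵀ * (X * S) = S * (Xᵀ * X * S) := by
    rw [Matrix.transpose_mul, hSsym]
    simp only [Matrix.mul_assoc]
  have hSA : S * (Xᵀ * X) = -(Xᵀ * X * S) := by
    have h' : S * (Xᵀ * X) = Xᵀ * X * S + S * (Xᵀ * X) - Xᵀ * X * S := by abel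
    rw [h', hS]; abel
  have htr : Matrix.trace ((X * S)ᵀ * (X * S)) = 0 := by
    have key : Matrix.trace (S * (Xᵀ * X * S)) = -Matrix.trace (S * (Xᵀ * X * S)) := by
      calc Matrix.trace (S * (Xᵀ * X * S)) = Matrix.trace ((S * (Xᵀ * X)) * S) := by
            rw [← Matrix.mul_assoc]
      _ = Matrix.trace (S * (S * (Xᵀ * X))) := Matrix.trace_mul_comm _ _
      _ = Matrix.trace (S * -(Xᵀ * X * S)) := by rw [hSA]
      _ = -Matrix.trace (S * (Xᵀ * X * S)) := by rw [Matrix.mul_neg, Matrix.trace_neg]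
    rw [e1]; linarith
  have hXS : X * S = 0 := frob_zero _ htr
  have hS0 : S = 0 := by
    have hJp : (-(J p)) * J p = 1 := by
      rw [Matrix.neg_mul, JmulJ]; simp
    calc S = 1 * S := by rw [Matrix.one_mul]
    _ = (-(J p)) * (J p) * S := by rw [hJp]
    _ = (-(J p)) * (Xᵀ * J n * X) * S := by rw [hX]
    _ = (-(J p)) * (Xᵀ * J n) * (X * S) := by simp only [Matrix.mul_assoc]
    _ = 0 := by rw [hXS, Matrix.mul_zero]
  have hskew : Ωᵀ = -Ω := by
    have h0 : Ω + Ωᵀ = 0 := by rw [← hSdef]; exact hS0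
    have h1 : Ωᵀ = Ω + Ωᵀ - Ω := by abel
    rw [h1, h0]; abel
  -- normalized Lyapunov equation
  have hΩ'' : Xᵀ * (X * Ω) + Ω * (Xᵀ * X)
      = -(Xᵀ * (J n * Y)) - Yᵀ * (J n * X) := by
    have := hΩ
    rw [Jtrans] at this
    simp only [Matrix.mul_assoc, Matrix.neg_mul, Matrix.mul_neg] at this ⊢
    rw [this]
  refine ⟨?_, ?_⟩
  · rw [Matrix.transpose_sub, Matrix.transpose_mul, Matrix.transpose_mul,
      Jtrans n, hskew]
    simp only [Matrix.sub_mul, Matrix.mul_sub, Matrix.neg_mul, Matrix.mul_neg,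
      neg_neg, Matrix.mul_assoc, hJJ']
    have e : Yᵀ * (J n * X) - -(Ω * (Xᵀ * X)) + (Xᵀ * (J n * Y) - -(Xᵀ * (X * Ω)))
        = (Xᵀ * (X * Ω) + Ω * (Xᵀ * X)) + (Yᵀ * (J n * X) + Xᵀ * (J n * Y)) := by
      abel
    rw [e, hΩ'']
    abel
  · intro Z hZ
    have hZ' : Xᵀ * (J n * Z) = -(Zᵀ * (J n * X)) := by
      have h1 : Xᵀ * J n * Z = Zᵀ * J n * X + Xᵀ * J n * Z - Zᵀ * J n * X := by abel
      rw [← Matrix.mul_assoc, h1, hZ, Matrix.mul_assoc]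
      abel
    have pathA : Matrix.trace ((J n * X * Ω)ᵀ * Z)
        = Matrix.trace (Ω * (Zᵀ * (J n * X))) := by
      rw [← Matrix.trace_transpose ((J n * X * Ω)ᵀ * Z), Matrix.transpose_mul,
        Matrix.transpose_transpose,
        show Zᵀ * (J n * X * Ω) = (Zᵀ * (J n * X)) * Ω by
          simp only [Matrix.mul_assoc],
        Matrix.trace_mul_comm]
    have pathB : Matrix.trace ((J n * X * Ω)ᵀ * Z)
        = -Matrix.trace (Ω * (Zᵀ * (J n * X))) := by
      rw [Matrix.transpose_mul, Matrix.transpose_mul, Jtrans, hskew]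
      simp only [Matrix.neg_mul, Matrix.mul_neg, neg_neg, Matrix.mul_assoc]
      rw [hZ']
      simp [Matrix.mul_neg, Matrix.trace_neg]
    rw [pathA] at pathB ⊢
    linarith
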